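/- Let 1/2 ≤ α < 1 and 0 < t. Define the modulus ω(t) := sup over h ∈ ℝ² with h₁, h₂ ≥ 0 and 0 < |h| ≤ t of the L₂-norm of y ↦ |y|^{-α} − |y+h|^{-α} over Γ_h = { y : y₁, y₂ ≥ 0, 0 < |y| < |h|/M } for fixed M > 2. Then there exist constants c > 0 and T > 0 such that ω(t) ≥ c·t^{1−α} for all 0 < t < T. -/

import Mathlib

/-!
Inside the quarter disk `Γ_h` of radius `|h|/M` we have `|y|^{-α} ≥ M^α |h|^{-α}` while
`|y + h| ≥ |h|/2`, so the integrand is at least `((M^α - 2^α) |h|^{-α})²` on a set containing a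
square of side `|h|/(2M)`; taking `h = (t, 0)` gives `ω(t) ≥ (M^α - 2^α)/(2M) · t^{1-α}`.
The supremum is finite because on the positive quadrant `|y| ≤ |y + h|`, so the integrand is
dominated by `|y|^{-2α}`, which is integrable near the origin of the plane since `2α < 2`.
-/

open MeasureTheory Metric Set

theorem EuclideanSpace.norm_le_norm_add_of_nonneg {ι : Type*} [Fintype ι]
    {x y : EuclideanSpace ℝ ι} (hx : ∀ i, 0 ≤ x i) (hy : ∀ i, 0 ≤ y i) : ‖x‖ ≤ ‖x + y‖ := by
  have hxy : 0 ≤ inner ℝ x y := by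
    rw [PiLp.inner_apply]
    exact Finset.sum_nonneg fun i _ => mul_nonneg (hy i) (hx i)
  have := norm_add_sq_real x y
  nlinarith [norm_nonneg x, norm_nonneg (x + y), sq_nonneg ‖y‖]

theorem EuclideanSpace.volume_preimage_ofLp_pi_Ioo {ι : Type*} [Fintype ι] (a b : ι → ℝ) :
    volume (WithLp.ofLp ⁻¹' (univ.pi fun i => Ioo (a i) (b i)) : Set (EuclideanSpace ℝ ι))
      = ∏ i, ENNReal.ofReal (b i - a i) := by
  rw [(PiLp.volume_preserving_ofLp ι).measure_preimage
    (MeasurableSet.univ_pi fun _ => measurableSet_Ioo).nullMeasurableSet, Real.volume_pi_Ioo]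

theorem sq_rpow_neg_sub_rpow_neg_le {a b α : ℝ} (ha : 0 < a) (hab : a ≤ b) (hα : 0 ≤ α) :
    (a ^ (-α) - b ^ (-α)) ^ 2 ≤ a ^ (-(2 * α)) := by
  have hba : b ^ (-α) ≤ a ^ (-α) := Real.rpow_le_rpow_of_nonpos ha hab (by linarith)
  have hb : 0 ≤ b ^ (-α) := Real.rpow_nonneg (ha.le.trans hab) _
  calc (a ^ (-α) - b ^ (-α)) ^ 2 ≤ (a ^ (-α)) ^ 2 := by nlinarith
    _ = a ^ (-(2 * α)) := by
      rw [← Real.rpow_natCast, ← Real.rpow_mul ha.le]; ring_nf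

theorem integrableOn_ball_norm_rpow_neg {E : Type*} [NormedAddCommGroup E] [NormedSpace ℝ E]
    [FiniteDimensional ℝ E] [MeasurableSpace E] [BorelSpace E] {μ : Measure E}
    [μ.IsAddHaarMeasure] (hd : 1 ≤ Module.finrank ℝ E) {s : ℝ} (hs : s < Module.finrank ℝ E)
    (r : ℝ) : IntegrableOn (fun y : E => ‖y‖ ^ (-s)) (ball 0 r) μ :=
  integrableOn_ball_of_norm_le_rpow (C := 1) hd hs
    (ae_of_all _ fun y => by rw [one_mul, Real.norm_of_nonneg (Real.rpow_nonneg (norm_nonneg y) _)])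
    (measurable_norm.pow_const _).aestronglyMeasurable

theorem le_norm_rpow_neg_sub_norm_add_rpow_neg {E : Type*} [SeminormedAddCommGroup E]
    {y h : E} {α M : ℝ}
    (hα : 0 ≤ α) (hM : 2 ≤ M) (hy : 0 < ‖y‖) (hyh : ‖y‖ < ‖h‖ / M) :
    (M ^ α - 2 ^ α) * ‖h‖ ^ (-α) ≤ ‖y‖ ^ (-α) - ‖y + h‖ ^ (-α) := by
  have hM0 : 0 < M := by linarith
  have hh : 0 < ‖h‖ := by
    have := hy.trans hyh; rwa [div_pos_iff_of_pos_right hM0] at this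
  have hnear : ‖h‖ ^ (-α) * M ^ α ≤ ‖y‖ ^ (-α) := by
    calc ‖h‖ ^ (-α) * M ^ α = (‖h‖ / M) ^ (-α) := by
          rw [Real.div_rpow hh.le hM0.le, Real.rpow_neg hM0.le, div_inv_eq_mul]
      _ ≤ ‖y‖ ^ (-α) := Real.rpow_le_rpow_of_nonpos hy hyh.le (by linarith)
  have hfar : ‖y + h‖ ^ (-α) ≤ ‖h‖ ^ (-α) * 2 ^ α := by
    have hy2 : ‖y‖ ≤ ‖h‖ / 2 := hyh.le.trans (div_le_div_of_nonneg_left hh.le two_pos hM)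
    have : ‖h‖ / 2 ≤ ‖y + h‖ := by
      have := norm_sub_norm_le h (-y)
      rw [norm_neg, sub_neg_eq_add, add_comm] at this
      linarith
    calc ‖y + h‖ ^ (-α) ≤ (‖h‖ / 2) ^ (-α) :=
          Real.rpow_le_rpow_of_nonpos (by positivity) this (by linarith)
      _ = ‖h‖ ^ (-α) * 2 ^ α := by
          rw [Real.div_rpow hh.le zero_le_two, Real.rpow_neg zero_le_two, div_inv_eq_mul]
  linarith

/-- The set `Γ_h` is `quarterDisk (|h| / M)`. -/
def quarterDisk (r : ℝ) : Set (EuclideanSpace ℝ (Fin 2)) :=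
  {y | 0 ≤ y 0 ∧ 0 ≤ y 1 ∧ 0 < ‖y‖ ∧ ‖y‖ < r}

theorem measurableSet_quarterDisk (r : ℝ) : MeasurableSet (quarterDisk r) := by
  unfold quarterDisk
  measurability

theorem quarterDisk_subset_ball (r : ℝ) : quarterDisk r ⊆ ball 0 r :=
  fun _ hy => mem_ball_zero_iff.2 hy.2.2.2

theorem ofLp_preimage_Ioo_subset_quarterDisk (r : ℝ) :
    WithLp.ofLp ⁻¹' (univ.pi fun _ => Ioo 0 (r / 2)) ⊆ quarterDisk r := by
  intro y hy
  simp only [mem_preimage, mem_univ_pi, Fin.forall_fin_two, mem_Ioo] at hy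
  obtain ⟨⟨hy0, hy0'⟩, hy1, hy1'⟩ := hy
  have hnorm := EuclideanSpace.real_norm_sq_eq y
  rw [Fin.sum_univ_two] at hnorm
  have hpos : 0 < ‖y‖ := norm_pos_iff.2 fun h => by simp [h] at hy0
  refine ⟨hy0.le, hy1.le, hpos, lt_of_pow_lt_pow_left₀ 2 (by linarith) ?_⟩
  nlinarith

theorem sq_half_le_volumeReal_quarterDisk {r : ℝ} (hr : 0 ≤ r) :
    (r / 2) ^ 2 ≤ volume.real (quarterDisk r) := by
  have hfin : volume (quarterDisk r) ≠ ⊤ :=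
    (measure_mono (quarterDisk_subset_ball r)).trans_lt measure_ball_lt_top |>.ne
  calc (r / 2) ^ 2 = volume.real (WithLp.ofLp ⁻¹' (univ.pi fun _ => Ioo 0 (r / 2)) :
        Set (EuclideanSpace ℝ (Fin 2))) := by
        rw [measureReal_def, EuclideanSpace.volume_preimage_ofLp_pi_Ioo, Fin.prod_univ_two,
          ← ENNReal.ofReal_mul (by linarith), ENNReal.toReal_ofReal (mul_self_nonneg _)]
        ring
    _ ≤ volume.real (quarterDisk r) :=
        measureReal_mono (ofLp_preimage_Ioo_subset_quarterDisk r) hfin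

section Integrand

variable {α : ℝ} {h : EuclideanSpace ℝ (Fin 2)}

theorem integrableOn_ball_norm_rpow_neg_two_mul (hα : α < 1) (R : ℝ) :
    IntegrableOn (fun y : EuclideanSpace ℝ (Fin 2) => ‖y‖ ^ (-(2 * α))) (ball 0 R) :=
  integrableOn_ball_norm_rpow_neg (by simp) (by simp; linarith) R

theorem sq_rpow_neg_sub_le_of_mem_quarterDisk (hα : 0 ≤ α) (hh0 : 0 ≤ h 0) (hh1 : 0 ≤ h 1)
    {r : ℝ} {y : EuclideanSpace ℝ (Fin 2)} (hy : y ∈ quarterDisk r) :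
    (‖y‖ ^ (-α) - ‖y + h‖ ^ (-α)) ^ 2 ≤ ‖y‖ ^ (-(2 * α)) :=
  sq_rpow_neg_sub_rpow_neg_le hy.2.2.1
    (EuclideanSpace.norm_le_norm_add_of_nonneg (Fin.forall_fin_two.2 ⟨hy.1, hy.2.1⟩)
      (Fin.forall_fin_two.2 ⟨hh0, hh1⟩)) hα

theorem integrableOn_quarterDisk (hα0 : 0 ≤ α) (hα1 : α < 1) (hh0 : 0 ≤ h 0) (hh1 : 0 ≤ h 1)
    (r : ℝ) :
    IntegrableOn (fun y => (‖y‖ ^ (-α) - ‖y + h‖ ^ (-α)) ^ 2) (quarterDisk r) := by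
  refine Integrable.mono'
    ((integrableOn_ball_norm_rpow_neg_two_mul hα1 r).mono_set (quarterDisk_subset_ball r))
    (by fun_prop) (ae_restrict_of_forall_mem (measurableSet_quarterDisk r) fun y hy => ?_)
  rw [Real.norm_of_nonneg (sq_nonneg _)]
  exact sq_rpow_neg_sub_le_of_mem_quarterDisk hα0 hh0 hh1 hy

theorem setIntegral_quarterDisk_le (hα0 : 0 ≤ α) (hα1 : α < 1) (hh0 : 0 ≤ h 0) (hh1 : 0 ≤ h 1)
    {r R : ℝ} (hrR : r ≤ R) :
    ∫ y in quarterDisk r, (‖y‖ ^ (-α) - ‖y + h‖ ^ (-α)) ^ 2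
      ≤ ∫ y in ball (0 : EuclideanSpace ℝ (Fin 2)) R, ‖y‖ ^ (-(2 * α)) := by
  have hint := integrableOn_ball_norm_rpow_neg_two_mul hα1 R
  calc ∫ y in quarterDisk r, (‖y‖ ^ (-α) - ‖y + h‖ ^ (-α)) ^ 2
      ≤ ∫ y in quarterDisk r, ‖y‖ ^ (-(2 * α)) :=
        integral_mono_of_nonneg (ae_of_all _ fun _ => sq_nonneg _)
          (hint.mono_set ((quarterDisk_subset_ball r).trans (ball_subset_ball hrR)))
          (ae_restrict_of_forall_mem (measurableSet_quarterDisk r) fun y hy =>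
            sq_rpow_neg_sub_le_of_mem_quarterDisk hα0 hh0 hh1 hy)
    _ ≤ ∫ y in ball 0 R, ‖y‖ ^ (-(2 * α)) :=
        setIntegral_mono_set hint (ae_of_all _ fun _ => Real.rpow_nonneg (norm_nonneg _) _)
          ((quarterDisk_subset_ball r).trans (ball_subset_ball hrR)).eventuallyLE

theorem le_setIntegral_quarterDisk {M : ℝ} (hα0 : 0 ≤ α) (hα1 : α < 1) (hM : 2 ≤ M)
    (hh0 : 0 ≤ h 0) (hh1 : 0 ≤ h 1) :
    ((M ^ α - 2 ^ α) * ‖h‖ ^ (-α)) ^ 2 * (‖h‖ / M / 2) ^ 2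
      ≤ ∫ y in quarterDisk (‖h‖ / M), (‖y‖ ^ (-α) - ‖y + h‖ ^ (-α)) ^ 2 := by
  have hfin : volume (quarterDisk (‖h‖ / M)) ≠ ⊤ :=
    (measure_mono (quarterDisk_subset_ball _)).trans_lt measure_ball_lt_top |>.ne
  have hd : 0 ≤ (M ^ α - 2 ^ α) * ‖h‖ ^ (-α) :=
    mul_nonneg (sub_nonneg.2 (Real.rpow_le_rpow zero_le_two hM hα0))
      (Real.rpow_nonneg (norm_nonneg _) _)
  calc ((M ^ α - 2 ^ α) * ‖h‖ ^ (-α)) ^ 2 * (‖h‖ / M / 2) ^ 2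
      ≤ ((M ^ α - 2 ^ α) * ‖h‖ ^ (-α)) ^ 2 * volume.real (quarterDisk (‖h‖ / M)) :=
        mul_le_mul_of_nonneg_left
          (sq_half_le_volumeReal_quarterDisk (div_nonneg (norm_nonneg _) (by linarith)))
          (sq_nonneg _)
    _ ≤ _ := setIntegral_ge_of_const_le_real (measurableSet_quarterDisk _) hfin
        (fun y hy => pow_le_pow_left₀ hd
          (le_norm_rpow_neg_sub_norm_add_rpow_neg hα0 hM hy.2.2.1 hy.2.2.2) 2)
        (integrableOn_quarterDisk hα0 hα1 hh0 hh1 _)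

end Integrand

theorem stmt_9 (α M : ℝ) (hα1 : 1/2 ≤ α) (hα2 : α < 1) (hM : 2 < M)
    (ω : ℝ → ℝ)
    (hω : ∀ t, 0 < t → ω t =
      sSup { v : ℝ | ∃ h : EuclideanSpace ℝ (Fin 2),
        0 ≤ h 0 ∧ 0 ≤ h 1 ∧ 0 < ‖h‖ ∧ ‖h‖ ≤ t ∧
        v = Real.sqrt (∫ y in {y : EuclideanSpace ℝ (Fin 2) |
              0 ≤ y 0 ∧ 0 ≤ y 1 ∧ 0 < ‖y‖ ∧ ‖y‖ < ‖h‖ / M},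
              (‖y‖ ^ (-α) - ‖y + h‖ ^ (-α)) ^ 2) }) :
    ∃ c > 0, ∃ T > 0, ∀ t, 0 < t → t < T → c * t ^ (1 - α) ≤ ω t := by
  have hα0 : 0 < α := by linarith
  have hM0 : 0 < M := by linarith
  have hMα : 2 ^ α < M ^ α := Real.rpow_lt_rpow zero_le_two hM hα0
  refine ⟨(M ^ α - 2 ^ α) / (2 * M), div_pos (by linarith) (by linarith), 1, one_pos,
    fun t ht _ => ?_⟩
  rw [hω t ht]
  -- `sSup` of a set that is not bounded above is `0`
  have hbdd : BddAbove { v : ℝ | ∃ h : EuclideanSpace ℝ (Fin 2),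
      0 ≤ h 0 ∧ 0 ≤ h 1 ∧ 0 < ‖h‖ ∧ ‖h‖ ≤ t ∧
      v = Real.sqrt (∫ y in quarterDisk (‖h‖ / M), (‖y‖ ^ (-α) - ‖y + h‖ ^ (-α)) ^ 2) } := by
    refine ⟨Real.sqrt (∫ y in ball (0 : EuclideanSpace ℝ (Fin 2)) (t / M), ‖y‖ ^ (-(2 * α))), ?_⟩
    rintro v ⟨h, hh0, hh1, -, hht, rfl⟩
    exact Real.sqrt_le_sqrt (setIntegral_quarterDisk_le hα0.le hα2 hh0 hh1
      (div_le_div_of_nonneg_right hht hM0.le))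
  set h₀ := EuclideanSpace.single (0 : Fin 2) t
  have hh₀ : ‖h₀‖ = t := by simp [h₀, ht.le]
  have hh₀0 : 0 ≤ h₀ 0 := by simp [h₀, ht.le]
  have hh₀1 : 0 ≤ h₀ 1 := by simp [h₀]
  refine le_trans ?_ (le_csSup hbdd ⟨h₀, hh₀0, hh₀1, hh₀.symm ▸ ht, hh₀.le, rfl⟩)
  calc (M ^ α - 2 ^ α) / (2 * M) * t ^ (1 - α)
      = Real.sqrt (((M ^ α - 2 ^ α) * ‖h₀‖ ^ (-α)) ^ 2 * (‖h₀‖ / M / 2) ^ 2) := by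
        rw [← mul_pow, Real.sqrt_sq (by positivity), hh₀, Real.rpow_sub ht, Real.rpow_one,
          Real.rpow_neg ht.le]
        field_simp
    _ ≤ _ := Real.sqrt_le_sqrt (le_setIntegral_quarterDisk hα0.le hα2 hM.le hh₀0 hh₀1)
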